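/- Let f be a real-valued function defined on triples (z₁,z₂,z₃) of pairwise distinct points of ℂ, and suppose that for every Möbius transformation φ(w) = (αw+β)/(γw+δ) with αδ−βγ ≠ 0 that is nonconstant and satisfies φ(zⱼ) ≠ ∞ for j = 1,2,3, one has f(φ(z₁),φ(z₂),φ(z₃)) = f(z₁,z₂,z₃) · |φ′(z₁)|^{−5/4} |φ′(z₂)|^{−5/48} |φ′(z₃)|^{−5/48}, where φ′(w) = (αδ−βγ)/(γw+δ)². Then there exists a constant C ∈ ℝ such that f(z₁,z₂,z₃) = C · F(z₁,z₂,z₃) for all pairwise distinct z₁,z₂,z₃ ∈ ℂ; if moreover f is everywhere strictly positive, then C > 0. -/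

import Mathlib

/-!
A Möbius map φ satisfies `(φ z - φ w)² = φ' z · φ' w · (z - w)²`, so a product of powers of the
three mutual distances is covariant, each point receiving half the exponents of the two distances
at it; for `F` these weights are `(-5/4, -5/48, -5/48)`. Hence `f / F` is Möbius invariant, and
since Möbius maps act transitively on triples of distinct points, it is constant.
-/

open Filter

noncomputable section

namespace PercLog

/-- The function `F(z₁,z₂,z₃) = |z₁-z₂|^{-5/4} |z₁-z₃|^{-5/4} |z₃-z₂|^{25/24}`. -/
def Ffun (z₁ z₂ z₃ : ℂ) : ℝ :=
  ‖z₁ - z₂‖ ^ (-(5/4 : ℝ)) * ‖z₁ - z₃‖ ^ (-(5/4 : ℝ)) *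
    ‖z₃ - z₂‖ ^ ((25 : ℝ)/24)

/-- The Möbius transformation `w ↦ (αw+β)/(γw+δ)`. -/
def moebius (α β γ δ : ℂ) (w : ℂ) : ℂ := (α * w + β) / (γ * w + δ)

/-- The derivative of the Möbius transformation, `(αδ-βγ)/(γw+δ)²`. -/
def moebiusDeriv (α β γ δ : ℂ) (w : ℂ) : ℂ := (α * δ - β * γ) / (γ * w + δ) ^ 2

def MoebiusCovariant (s₁ s₂ s₃ : ℝ) (f : ℂ → ℂ → ℂ → ℝ) : Prop :=
  ∀ α β γ δ : ℂ, α * δ - β * γ ≠ 0 →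
    ∀ z₁ z₂ z₃ : ℂ, z₁ ≠ z₂ → z₁ ≠ z₃ → z₂ ≠ z₃ →
      γ * z₁ + δ ≠ 0 → γ * z₂ + δ ≠ 0 → γ * z₃ + δ ≠ 0 →
      f (moebius α β γ δ z₁) (moebius α β γ δ z₂) (moebius α β γ δ z₃) =
        f z₁ z₂ z₃ * ‖moebiusDeriv α β γ δ z₁‖ ^ s₁ *
          ‖moebiusDeriv α β γ δ z₂‖ ^ s₂ * ‖moebiusDeriv α β γ δ z₃‖ ^ s₃

section Moebius

variable {α β γ δ z w : ℂ}

lemma moebius_sub_sq (hz : γ * z + δ ≠ 0) (hw : γ * w + δ ≠ 0) :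
    (moebius α β γ δ z - moebius α β γ δ w) ^ 2 =
      moebiusDeriv α β γ δ z * moebiusDeriv α β γ δ w * (z - w) ^ 2 := by
  unfold moebius moebiusDeriv
  rw [div_sub_div _ _ hz hw]
  field_simp
  ring

lemma norm_moebiusDeriv_pos (hdet : α * δ - β * γ ≠ 0) (hz : γ * z + δ ≠ 0) :
    0 < ‖moebiusDeriv α β γ δ z‖ :=
  norm_pos_iff.mpr (div_ne_zero hdet (pow_ne_zero 2 hz))

lemma norm_moebius_sub_rpow (e : ℝ) (hz : γ * z + δ ≠ 0) (hw : γ * w + δ ≠ 0) :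
    ‖moebius α β γ δ z - moebius α β γ δ w‖ ^ e =
      ‖moebiusDeriv α β γ δ z‖ ^ (e / 2) * ‖moebiusDeriv α β γ δ w‖ ^ (e / 2) *
        ‖z - w‖ ^ e := by
  have sq_rpow_half {x : ℝ} (hx : 0 ≤ x) : x ^ e = (x ^ 2) ^ (e / 2) := by
    rw [← Real.rpow_two, ← Real.rpow_mul hx]
    ring_nf
  have hsq := congrArg (‖·‖) (moebius_sub_sq (α := α) (β := β) hz hw)
  simp only [norm_pow, norm_mul] at hsq
  rw [sq_rpow_half (norm_nonneg _), hsq, Real.mul_rpow (by positivity) (by positivity),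
    Real.mul_rpow (by positivity) (by positivity), ← sq_rpow_half (norm_nonneg _)]

end Moebius

lemma Ffun_pos {z₁ z₂ z₃ : ℂ} (h₁₂ : z₁ ≠ z₂) (h₁₃ : z₁ ≠ z₃) (h₂₃ : z₂ ≠ z₃) :
    0 < Ffun z₁ z₂ z₃ := by
  have := norm_pos_iff.mpr (sub_ne_zero.mpr h₁₂)
  have := norm_pos_iff.mpr (sub_ne_zero.mpr h₁₃)
  have := norm_pos_iff.mpr (sub_ne_zero.mpr h₂₃.symm)
  unfold Ffun
  positivity

lemma moebiusCovariant_Ffun : MoebiusCovariant (-(5/4)) (-(5/48)) (-(5/48)) Ffun := by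
  intro α β γ δ hdet z₁ z₂ z₃ _ _ _ hz₁ hz₂ hz₃
  have split {x a b c : ℝ} (hx : 0 < x) (h : a = b + c) : x ^ a = x ^ b * x ^ c :=
    h ▸ Real.rpow_add hx b c
  have w₁ : (-(5/4) : ℝ) = -(5/4) / 2 + -(5/4) / 2 := by norm_num
  have w₂ : (-(5/48) : ℝ) = -(5/4) / 2 + 25/24 / 2 := by norm_num
  unfold Ffun
  rw [norm_moebius_sub_rpow _ hz₁ hz₂, norm_moebius_sub_rpow _ hz₁ hz₃,
    norm_moebius_sub_rpow _ hz₃ hz₂, split (norm_moebiusDeriv_pos hdet hz₁) w₁,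
    split (norm_moebiusDeriv_pos hdet hz₂) w₂, split (norm_moebiusDeriv_pos hdet hz₃) w₂]
  ring

lemma exists_moebius_map_zero_one_two {q₁ q₂ q₃ : ℂ}
    (h₁₂ : q₁ ≠ q₂) (h₁₃ : q₁ ≠ q₃) (h₂₃ : q₂ ≠ q₃) :
    ∃ α β γ δ : ℂ, α * δ - β * γ ≠ 0 ∧
      γ * 0 + δ ≠ 0 ∧ γ * 1 + δ ≠ 0 ∧ γ * 2 + δ ≠ 0 ∧
      moebius α β γ δ 0 = q₁ ∧ moebius α β γ δ 1 = q₂ ∧ moebius α β γ δ 2 = q₃ := by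
  have d₂₁ := sub_ne_zero.mpr h₁₂.symm
  have d₁₃ := sub_ne_zero.mpr h₁₃
  have d₂₃ := sub_ne_zero.mpr h₂₃
  have hγδ₀ : (2 * q₂ - q₁ - q₃) * 0 + -2 * (q₂ - q₃) ≠ 0 := by
    rw [mul_zero, zero_add]; exact mul_ne_zero (by norm_num) d₂₃
  have hγδ₁ : (2 * q₂ - q₁ - q₃) * 1 + -2 * (q₂ - q₃) ≠ 0 := by
    rw [show (2 * q₂ - q₁ - q₃) * 1 + -2 * (q₂ - q₃) = -(q₁ - q₃) by ring]
    exact neg_ne_zero.mpr d₁₃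
  have hγδ₂ : (2 * q₂ - q₁ - q₃) * 2 + -2 * (q₂ - q₃) ≠ 0 := by
    rw [show (2 * q₂ - q₁ - q₃) * 2 + -2 * (q₂ - q₃) = 2 * (q₂ - q₁) by ring]
    exact mul_ne_zero two_ne_zero d₂₁
  refine ⟨q₃ * (q₂ - q₁) + q₁ * (q₂ - q₃), -2 * q₁ * (q₂ - q₃), 2 * q₂ - q₁ - q₃, -2 * (q₂ - q₃),
    ?_, hγδ₀, hγδ₁, hγδ₂, ?_, ?_, ?_⟩
  · rw [show (q₃ * (q₂ - q₁) + q₁ * (q₂ - q₃)) * (-2 * (q₂ - q₃)) - -2 * q₁ * (q₂ - q₃) *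
        (2 * q₂ - q₁ - q₃) = 2 * (q₂ - q₁) * (q₁ - q₃) * (q₂ - q₃) by ring]
    exact mul_ne_zero (mul_ne_zero (mul_ne_zero two_ne_zero d₂₁) d₁₃) d₂₃
  · unfold moebius; rw [div_eq_iff hγδ₀]; ring
  · unfold moebius; rw [div_eq_iff hγδ₁]; ring
  · unfold moebius; rw [div_eq_iff hγδ₂]; ring

lemma MoebiusCovariant.eq_div_mul {s₁ s₂ s₃ : ℝ} {f g : ℂ → ℂ → ℂ → ℝ}
    (hf : MoebiusCovariant s₁ s₂ s₃ f) (hg : MoebiusCovariant s₁ s₂ s₃ g) (hg₀ : g 0 1 2 ≠ 0)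
    {z₁ z₂ z₃ : ℂ} (h₁₂ : z₁ ≠ z₂) (h₁₃ : z₁ ≠ z₃) (h₂₃ : z₂ ≠ z₃) :
    f z₁ z₂ z₃ = f 0 1 2 / g 0 1 2 * g z₁ z₂ z₃ := by
  obtain ⟨α, β, γ, δ, hdet, hz₁, hz₂, hz₃, rfl, rfl, rfl⟩ :=
    exists_moebius_map_zero_one_two h₁₂ h₁₃ h₂₃
  have h01 : (0 : ℂ) ≠ 1 := zero_ne_one
  have h02 : (0 : ℂ) ≠ 2 := two_ne_zero.symm
  have h12 : (1 : ℂ) ≠ 2 := by norm_num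
  rw [hf α β γ δ hdet 0 1 2 h01 h02 h12 hz₁ hz₂ hz₃,
    hg α β γ δ hdet 0 1 2 h01 h02 h12 hz₁ hz₂ hz₃]
  field_simp

/-- eqns `::OPE2_COV` and `::OPE2_limit_aux1`: a function of
three (pairwise distinct) points that is Möbius covariant with weights
`(5/4, 5/48, 5/48)` is a constant multiple of `F`; if the function is strictly
positive, the constant is strictly positive. -/
theorem covariant_three_point_is_F
    (f : ℂ → ℂ → ℂ → ℝ)
    (hcov : ∀ α β γ δ : ℂ, α * δ - β * γ ≠ 0 →
      ∀ z₁ z₂ z₃ : ℂ, z₁ ≠ z₂ → z₁ ≠ z₃ → z₂ ≠ z₃ →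
        γ * z₁ + δ ≠ 0 → γ * z₂ + δ ≠ 0 → γ * z₃ + δ ≠ 0 →
        f (moebius α β γ δ z₁) (moebius α β γ δ z₂) (moebius α β γ δ z₃) =
          f z₁ z₂ z₃ * ‖moebiusDeriv α β γ δ z₁‖ ^ (-(5/4 : ℝ)) *
            ‖moebiusDeriv α β γ δ z₂‖ ^ (-(5/48 : ℝ)) *
            ‖moebiusDeriv α β γ δ z₃‖ ^ (-(5/48 : ℝ))) :
    ∃ C : ℝ,
      (∀ z₁ z₂ z₃ : ℂ, z₁ ≠ z₂ → z₁ ≠ z₃ → z₂ ≠ z₃ → f z₁ z₂ z₃ = C * Ffun z₁ z₂ z₃) ∧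
      ((∀ z₁ z₂ z₃ : ℂ, z₁ ≠ z₂ → z₁ ≠ z₃ → z₂ ≠ z₃ → 0 < f z₁ z₂ z₃) → 0 < C) := by
  have hF₀ : 0 < Ffun 0 1 2 := Ffun_pos zero_ne_one two_ne_zero.symm (by norm_num)
  refine ⟨f 0 1 2 / Ffun 0 1 2, ?_, ?_⟩
  · intro z₁ z₂ z₃ h₁₂ h₁₃ h₂₃
    exact MoebiusCovariant.eq_div_mul hcov moebiusCovariant_Ffun hF₀.ne' h₁₂ h₁₃ h₂₃
  · intro hpos
    exact div_pos (hpos 0 1 2 zero_ne_one two_ne_zero.symm (by norm_num)) hF₀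

end PercLog
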